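/- arXiv:1311.5961 — 2 statements merged into one kernel-verified Lean document; each statement's English description precedes it below -/
import Mathlib

section
/- For a real number a > 0 and an integer b with 0 ≤ b < a+1, the rising factorial satisfies exp(-b^3/(6a^2)) ≤ a^{(b)} / (a^b · exp(b(b-1)/(2a))) ≤ 1, where a^{(b)} = a(a+1)···(a+b-1). -/
open Finset Real

/-- The rising factorial `a^{(b)} = a(a+1)⋯(a+b-1)`. -/
noncomputable def risingFac (a : ℝ) (b : ℕ) : ℝ := ∏ j ∈ Finset.range b, (a + j)

/-!
Write `a + j = a (1 + j/a)` and squeeze each factor between the elementary bounds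
`exp (t - t²/2) ≤ 1 + t ≤ exp t` (for `t ≥ 0`). Taking the product turns the exponents into
`∑ j/a = b(b-1)/(2a)` and `∑ j²/(2a²) ≤ b³/(6a²)`.
-/

lemma exp_sub_sq_div_two_le_one_add {x : ℝ} (hx : 0 ≤ x) : exp (x - x ^ 2 / 2) ≤ 1 + x := by
  set g : ℝ → ℝ := fun y ↦ (1 + y) * exp (y ^ 2 / 2 - y)
  have hg (y : ℝ) : HasDerivAt g (y ^ 2 * exp (y ^ 2 / 2 - y)) y := by
    have hexp :
        HasDerivAt (fun y : ℝ ↦ exp (y ^ 2 / 2 - y)) (exp (y ^ 2 / 2 - y) * (y - 1)) y := by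
      simpa using (((hasDerivAt_pow 2 y).div_const 2).sub (hasDerivAt_id y)).exp
    exact (((hasDerivAt_id y).const_add 1).fun_mul hexp).congr_deriv (by simp only [id_eq]; ring)
  have hg_mono : Monotone g :=
    monotone_of_deriv_nonneg (fun y ↦ (hg y).differentiableAt) fun y ↦ by
      rw [(hg y).deriv]; positivity
  have h0x : 1 ≤ (1 + x) * exp (x ^ 2 / 2 - x) := by simpa [g] using hg_mono hx
  calc exp (x - x ^ 2 / 2) ≤ exp (x - x ^ 2 / 2) * ((1 + x) * exp (x ^ 2 / 2 - x)) :=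
        le_mul_of_one_le_right (exp_pos _).le h0x
    _ = 1 + x := by rw [mul_left_comm, ← exp_add]; simp

lemma mul_exp_sub_le_add {a t : ℝ} (ha : 0 < a) (ht : 0 ≤ t) :
    a * exp (t / a - t ^ 2 / (2 * a ^ 2)) ≤ a + t := by
  have h := exp_sub_sq_div_two_le_one_add (div_nonneg ht ha.le)
  calc a * exp (t / a - t ^ 2 / (2 * a ^ 2)) = a * exp (t / a - (t / a) ^ 2 / 2) := by
        congr 2; field_simp
    _ ≤ a * (1 + t / a) := by gcongr
    _ = a + t := by field_simp

lemma add_le_mul_exp_div {a : ℝ} (ha : 0 < a) (t : ℝ) : a + t ≤ a * exp (t / a) :=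
  calc a + t = a * (t / a + 1) := by field_simp; ring
    _ ≤ a * exp (t / a) := by gcongr; exact add_one_le_exp _

lemma prod_range_mul_exp (a : ℝ) (f : ℕ → ℝ) (b : ℕ) :
    ∏ j ∈ range b, a * exp (f j) = a ^ b * exp (∑ j ∈ range b, f j) := by
  rw [prod_mul_distrib, prod_const, card_range, exp_sum]

lemma sum_range_natCast (b : ℕ) : ∑ j ∈ range b, (j : ℝ) = b * (b - 1) / 2 := by
  induction b with
  | zero => simp
  | succ n ih => rw [sum_range_succ, ih]; push_cast; ring

lemma sum_range_natCast_sq_le (b : ℕ) : ∑ j ∈ range b, (j : ℝ) ^ 2 ≤ b ^ 3 / 3 := by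
  induction b with
  | zero => simp
  | succ n ih =>
    rw [sum_range_succ]
    push_cast
    nlinarith [(Nat.cast_nonneg n : (0 : ℝ) ≤ n)]

lemma risingFac_le_pow_mul_exp {a : ℝ} (ha : 0 < a) (b : ℕ) :
    risingFac a b ≤ a ^ b * exp (b * (b - 1) / (2 * a)) :=
  calc risingFac a b ≤ ∏ j ∈ range b, a * exp ((j : ℝ) / a) :=
        prod_le_prod (fun j _ ↦ by positivity) fun j _ ↦ add_le_mul_exp_div ha j
    _ = a ^ b * exp (b * (b - 1) / (2 * a)) := by
        rw [prod_range_mul_exp, ← sum_div, sum_range_natCast, div_div]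

lemma pow_mul_exp_le_risingFac {a : ℝ} (ha : 0 < a) (b : ℕ) :
    a ^ b * exp (b * (b - 1) / (2 * a) - b ^ 3 / (6 * a ^ 2)) ≤ risingFac a b := by
  have hexponent : (b : ℝ) * (b - 1) / (2 * a) - b ^ 3 / (6 * a ^ 2) ≤
      ∑ j ∈ range b, ((j : ℝ) / a - (j : ℝ) ^ 2 / (2 * a ^ 2)) := by
    rw [sum_sub_distrib, ← sum_div, ← sum_div, sum_range_natCast]
    have hsq : (∑ j ∈ range b, (j : ℝ) ^ 2) / (2 * a ^ 2) ≤ b ^ 3 / 3 / (2 * a ^ 2) := by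
      gcongr; exact sum_range_natCast_sq_le b
    calc (b : ℝ) * (b - 1) / (2 * a) - b ^ 3 / (6 * a ^ 2)
        = b * (b - 1) / 2 / a - b ^ 3 / 3 / (2 * a ^ 2) := by ring
      _ ≤ _ := by linarith
  calc a ^ b * exp (b * (b - 1) / (2 * a) - b ^ 3 / (6 * a ^ 2))
      ≤ a ^ b * exp (∑ j ∈ range b, ((j : ℝ) / a - (j : ℝ) ^ 2 / (2 * a ^ 2))) := by
        gcongr
    _ = ∏ j ∈ range b, a * exp ((j : ℝ) / a - (j : ℝ) ^ 2 / (2 * a ^ 2)) :=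
        (prod_range_mul_exp _ _ _).symm
    _ ≤ risingFac a b :=
        prod_le_prod (fun j _ ↦ by positivity) fun j _ ↦ mul_exp_sub_le_add ha j.cast_nonneg

theorem risingFac_rough_bounds_general (a : ℝ) (ha : 0 < a) (b : ℕ) :
    Real.exp (-(b : ℝ) ^ 3 / (6 * a ^ 2)) ≤
      risingFac a b / (a ^ b * Real.exp ((b : ℝ) * ((b : ℝ) - 1) / (2 * a))) ∧
    risingFac a b / (a ^ b * Real.exp ((b : ℝ) * ((b : ℝ) - 1) / (2 * a))) ≤ 1 := by
  have hden : 0 < a ^ b * exp ((b : ℝ) * (b - 1) / (2 * a)) := by positivity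
  refine ⟨?_, (div_le_one hden).2 (risingFac_le_pow_mul_exp ha b)⟩
  rw [le_div_iff₀ hden]
  calc exp (-(b : ℝ) ^ 3 / (6 * a ^ 2)) * (a ^ b * exp (b * (b - 1) / (2 * a)))
      = a ^ b * exp (b * (b - 1) / (2 * a) - b ^ 3 / (6 * a ^ 2)) := by
        rw [sub_eq_add_neg (_ / _), exp_add, neg_div]; ring
    _ ≤ risingFac a b := pow_mul_exp_le_risingFac ha b

theorem risingFac_rough_bounds (a : ℝ) (ha : 0 < a) (b : ℕ) (hb : (b : ℝ) < a + 1) :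
    Real.exp (-(b : ℝ) ^ 3 / (6 * a ^ 2)) ≤
      risingFac a b / (a ^ b * Real.exp ((b : ℝ) * ((b : ℝ) - 1) / (2 * a))) ∧
    risingFac a b / (a ^ b * Real.exp ((b : ℝ) * ((b : ℝ) - 1) / (2 * a))) ≤ 1 :=
  risingFac_rough_bounds_general a ha b
end

section
/- For a real number a > 0 and an integer b with 0 ≤ b < a+1, the rising factorial satisfies 1 ≤ a^{(b)} / (a^b · exp(b(b-1)/(2a) - b(b-1)(2b-1)/(12a^2))) ≤ exp(b^4/(12a^3)). -/
open Finset Real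

/-!
Writing `a^{(b)} = a^b ∏_{j<b} (1 + j/a)`, the logarithm of the ratio in question is
`∑_{j<b} log (1 + j/a)` minus the exponent. The elementary bounds
`x - x²/2 ≤ log (1 + x) ≤ x - x²/2 + x³/3` for `x ≥ 0`, summed over `x = j/a` with the
Faulhaber sums of `j`, `j²` and `j³`, squeeze that logarithm between `0` and
`b²(b-1)²/(12a³) ≤ b⁴/(12a³)`.
-/

theorem monotoneOn_Ici_of_hasDerivAt_nonneg {c : ℝ} {f f' : ℝ → ℝ}
    (hf : ∀ x, c ≤ x → HasDerivAt f (f' x) x) (hf' : ∀ x, c < x → 0 ≤ f' x) :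
    MonotoneOn f (Set.Ici c) :=
  monotoneOn_of_hasDerivWithinAt_nonneg (convex_Ici c)
    (fun x hx ↦ (hf x hx).continuousAt.continuousWithinAt)
    (fun x hx ↦ (hf x (interior_subset hx)).hasDerivWithinAt)
    (fun x hx ↦ hf' x (by rwa [interior_Ici] at hx))

namespace Real

theorem hasDerivAt_log_one_add {x : ℝ} (hx : -1 < x) :
    HasDerivAt (fun t ↦ log (1 + t)) (1 + x)⁻¹ x := by
  simpa using ((hasDerivAt_id x).const_add 1).log (by rw [id]; linarith)

theorem sub_sq_div_two_le_log_one_add {x : ℝ} (hx : 0 ≤ x) : x - x ^ 2 / 2 ≤ log (1 + x) := by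
  have hmono : MonotoneOn (fun t ↦ log (1 + t) - (t - t ^ 2 / 2)) (Set.Ici 0) := by
    refine monotoneOn_Ici_of_hasDerivAt_nonneg (f' := fun t ↦ t ^ 2 / (1 + t))
      (fun t ht ↦ ?_) (fun t ht ↦ by positivity)
    refine ((hasDerivAt_log_one_add (by linarith)).sub
      ((hasDerivAt_id t).sub ((hasDerivAt_pow 2 t).div_const 2))).congr_deriv ?_
    field_simp
    ring
  simpa using hmono Set.self_mem_Ici hx hx

theorem log_one_add_le_sub_sq_div_two_add_cube_div_three {x : ℝ} (hx : 0 ≤ x) :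
    log (1 + x) ≤ x - x ^ 2 / 2 + x ^ 3 / 3 := by
  have hmono : MonotoneOn (fun t ↦ t - t ^ 2 / 2 + t ^ 3 / 3 - log (1 + t)) (Set.Ici 0) := by
    refine monotoneOn_Ici_of_hasDerivAt_nonneg (f' := fun t ↦ t ^ 3 / (1 + t))
      (fun t ht ↦ ?_) (fun t ht ↦ by positivity)
    refine ((((hasDerivAt_id t).sub ((hasDerivAt_pow 2 t).div_const 2)).add
      ((hasDerivAt_pow 3 t).div_const 3)).sub
      (hasDerivAt_log_one_add (by linarith))).congr_deriv ?_
    field_simp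
    ring
  simpa using hmono Set.self_mem_Ici hx hx

end Real

theorem sum_range_div_sub_sq_div_two (a : ℝ) (b : ℕ) :
    ∑ j ∈ range b, ((j : ℝ) / a - ((j : ℝ) / a) ^ 2 / 2) =
      b * (b - 1) / (2 * a) - b * (b - 1) * (2 * b - 1) / (12 * a ^ 2) := by
  induction b with
  | zero => simp
  | succ n ih => rw [sum_range_succ, ih]; push_cast; ring

theorem sum_range_cube_div_three (a : ℝ) (b : ℕ) :
    ∑ j ∈ range b, ((j : ℝ) / a) ^ 3 / 3 = b ^ 2 * (b - 1) ^ 2 / (12 * a ^ 3) := by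
  induction b with
  | zero => simp
  | succ n ih => rw [sum_range_succ, ih]; push_cast; ring

theorem risingFac_eq_pow_mul_exp_sum_log {a : ℝ} (ha : 0 < a) (b : ℕ) :
    risingFac a b = a ^ b * exp (∑ j ∈ range b, log (1 + j / a)) := by
  have hpos : ∀ j ∈ range b, 0 < 1 + (j : ℝ) / a := fun j _ ↦ by positivity
  rw [← log_prod fun j hj ↦ (hpos j hj).ne', exp_log (prod_pos hpos)]
  calc risingFac a b = ∏ j ∈ range b, (1 + (j : ℝ) / a) * a :=
        prod_congr rfl fun j _ ↦ by field_simp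
    _ = a ^ b * ∏ j ∈ range b, (1 + (j : ℝ) / a) := by
        rw [← prod_mul_pow_card, card_range, mul_comm]

theorem le_sum_range_log_one_add_div {a : ℝ} (ha : 0 ≤ a) (b : ℕ) :
    b * (b - 1) / (2 * a) - b * (b - 1) * (2 * b - 1) / (12 * a ^ 2) ≤
      ∑ j ∈ range b, log (1 + j / a) := by
  rw [← sum_range_div_sub_sq_div_two]
  exact sum_le_sum fun j _ ↦ sub_sq_div_two_le_log_one_add (by positivity)

theorem sum_range_log_one_add_div_le {a : ℝ} (ha : 0 ≤ a) (b : ℕ) :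
    ∑ j ∈ range b, log (1 + j / a) ≤
      b * (b - 1) / (2 * a) - b * (b - 1) * (2 * b - 1) / (12 * a ^ 2) +
        b ^ 2 * (b - 1) ^ 2 / (12 * a ^ 3) := by
  rw [← sum_range_div_sub_sq_div_two, ← sum_range_cube_div_three, ← sum_add_distrib]
  exact sum_le_sum fun j _ ↦ log_one_add_le_sub_sq_div_two_add_cube_div_three (by positivity)

theorem risingFac_sharp_bounds_general (a : ℝ) (ha : 0 < a) (b : ℕ) :
    1 ≤ risingFac a b /
        (a ^ b * Real.exp ((b : ℝ) * ((b : ℝ) - 1) / (2 * a) -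
          (b : ℝ) * ((b : ℝ) - 1) * (2 * (b : ℝ) - 1) / (12 * a ^ 2))) ∧
    risingFac a b /
        (a ^ b * Real.exp ((b : ℝ) * ((b : ℝ) - 1) / (2 * a) -
          (b : ℝ) * ((b : ℝ) - 1) * (2 * (b : ℝ) - 1) / (12 * a ^ 2))) ≤
      Real.exp ((b : ℝ) ^ 4 / (12 * a ^ 3)) := by
  set E : ℝ := (b : ℝ) * ((b : ℝ) - 1) / (2 * a) -
      (b : ℝ) * ((b : ℝ) - 1) * (2 * (b : ℝ) - 1) / (12 * a ^ 2)
  set S : ℝ := ∑ j ∈ range b, log (1 + j / a)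
  have hratio : risingFac a b / (a ^ b * exp E) = exp (S - E) := by
    rw [risingFac_eq_pow_mul_exp_sum_log ha, mul_div_mul_left _ _ (pow_ne_zero b ha.ne'),
      ← exp_sub]
  have hcubic : (b : ℝ) ^ 2 * (b - 1) ^ 2 / (12 * a ^ 3) ≤ b ^ 4 / (12 * a ^ 3) := by
    gcongr
    rcases b.eq_zero_or_pos with rfl | hb
    · simp
    · have : (1 : ℝ) ≤ b := by exact_mod_cast hb
      nlinarith
  have hlower : E ≤ S := le_sum_range_log_one_add_div ha.le b
  have hupper := sum_range_log_one_add_div_le ha.le b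
  rw [hratio]
  exact ⟨one_le_exp (by linarith), exp_le_exp.mpr (by linarith)⟩

theorem risingFac_sharp_bounds (a : ℝ) (ha : 0 < a) (b : ℕ) (hb : (b : ℝ) < a + 1) :
    1 ≤ risingFac a b /
        (a ^ b * Real.exp ((b : ℝ) * ((b : ℝ) - 1) / (2 * a) -
          (b : ℝ) * ((b : ℝ) - 1) * (2 * (b : ℝ) - 1) / (12 * a ^ 2))) ∧
    risingFac a b /
        (a ^ b * Real.exp ((b : ℝ) * ((b : ℝ) - 1) / (2 * a) -
          (b : ℝ) * ((b : ℝ) - 1) * (2 * (b : ℝ) - 1) / (12 * a ^ 2))) ≤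
      Real.exp ((b : ℝ) ^ 4 / (12 * a ^ 3)) :=
  risingFac_sharp_bounds_general a ha b
end
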